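/- Let Z be a real-valued square-integrable random variable and X a random symmetric d×d matrix with E[X^2] finite. Then −(E[Z^2])^{1/2} (E[X^2])^{1/2} ⪯ E[Z X] ⪯ (E[Z^2])^{1/2} (E[X^2])^{1/2}, where ⪯ denotes the positive semidefinite (Loewner) order and M^{1/2} the matrix square root of a positive semidefinite matrix M. -/

import Mathlib

open MeasureTheory Matrix

lemma my_integral_cs {Ω : Type*} [MeasurableSpace Ω] (μ : Measure Ω)
    (f g : Ω → ℝ) (hf : Integrable (fun ω => f ω ^ 2) μ)
    (hg : Integrable (fun ω => g ω ^ 2) μ)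
    (hfg : Integrable (fun ω => f ω * g ω) μ) :
    (∫ ω, f ω * g ω ∂μ) ^ 2 ≤ (∫ ω, f ω ^ 2 ∂μ) * (∫ ω, g ω ^ 2 ∂μ) := by
  set a := ∫ ω, f ω ^ 2 ∂μ with ha
  set b := 2 * ∫ ω, f ω * g ω ∂μ with hb
  set c := ∫ ω, g ω ^ 2 ∂μ with hc
  have h2 : ∀ t : ℝ, 0 ≤ a * (t * t) + b * t + c := by
    intro t
    have h0 : 0 ≤ ∫ ω, (t * f ω + g ω) ^ 2 ∂μ :=
      integral_nonneg fun ω => sq_nonneg _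
    have h1 : (fun ω => (t * f ω + g ω) ^ 2)
        = fun ω => (t ^ 2 * f ω ^ 2 + (2 * t) * (f ω * g ω)) + g ω ^ 2 := by
      funext ω; ring
    have hi1 : Integrable (fun ω => t ^ 2 * f ω ^ 2 + (2 * t) * (f ω * g ω)) μ := by
      exact (hf.const_mul _).add (hfg.const_mul _)
    rw [h1, integral_add hi1 hg, integral_add (hf.const_mul _) (hfg.const_mul _),
      integral_const_mul, integral_const_mul] at h0
    rw [ha, hb, hc]
    nlinarith [h0]
  have := discrim_le_zero h2
  rw [discrim, hb] at this
  nlinarith [this]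

lemma my_psd_sub_of_sq {d : ℕ} {A B : Matrix (Fin d) (Fin d) ℝ}
    (hA : A.IsHermitian) (hB : B.PosSemidef)
    (h : (B * B - A * A).PosSemidef) : (B - A).PosSemidef := by
  have hC : (B - A).IsHermitian := hB.1.sub hA
  rw [hC.posSemidef_iff_eigenvalues_nonneg]
  intro i
  by_contra hneg
  push_neg at hneg
  set lam := hC.eigenvalues i with hlam
  set v : Fin d → ℝ := ⇑(hC.eigenvectorBasis i) with hv
  have hev : (B - A) *ᵥ v = lam • v := hC.mulVec_eigenvectorBasis i
  have hvv : v ⬝ᵥ v = 1 := by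
    have h1 : (inner ℝ (hC.eigenvectorBasis i) (hC.eigenvectorBasis i) : ℝ) = 1 := by
      rw [real_inner_self_eq_norm_sq, hC.eigenvectorBasis.orthonormal.1 i]
      norm_num
    rw [← h1]
    simp [dotProduct, PiLp.inner_apply, RCLike.inner_apply, starRingEnd_apply, hv]
    simpa only [PiLp.inner_apply, RCLike.inner_apply, conj_trivial] using h1
  have hBt : Bᵀ = B := by
    ext i j
    have := congrFun (congrFun hB.1 i) j
    simpa [Matrix.conjTranspose_apply] using this
  have hAt : Aᵀ = A := by
    ext i j
    have := congrFun (congrFun hA i) j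
    simpa [Matrix.conjTranspose_apply] using this
  have hAv : A *ᵥ v = B *ᵥ v - lam • v := by
    rw [← hev, sub_mulVec]; abel
  have key : 0 ≤ v ⬝ᵥ ((B * B - A * A) *ᵥ v) := by simpa using h.dotProduct_mulVec_nonneg v
  have hBB : v ⬝ᵥ ((B * B) *ᵥ v) = (B *ᵥ v) ⬝ᵥ (B *ᵥ v) := by
    rw [← mulVec_mulVec, dotProduct_mulVec, ← mulVec_transpose, hBt]
  have hAA : v ⬝ᵥ ((A * A) *ᵥ v) = (A *ᵥ v) ⬝ᵥ (A *ᵥ v) := by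
    rw [← mulVec_mulVec, dotProduct_mulVec, ← mulVec_transpose, hAt]
  have hBv : 0 ≤ v ⬝ᵥ (B *ᵥ v) := by simpa using hB.dotProduct_mulVec_nonneg v
  rw [sub_mulVec, dotProduct_sub, hBB, hAA, hAv] at key
  set u := B *ᵥ v with hu
  rw [dotProduct_sub, sub_dotProduct, sub_dotProduct, smul_dotProduct,
    dotProduct_smul, smul_dotProduct, dotProduct_smul, smul_eq_mul, smul_eq_mul,
    smul_eq_mul, dotProduct_comm v u] at key
  rw [hvv] at key
  have hBv' : 0 ≤ u ⬝ᵥ v := by rwa [dotProduct_comm]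
  have h3 : lam * (u ⬝ᵥ v) ≤ 0 := mul_nonpos_of_nonpos_of_nonneg hneg.le hBv'
  have h4 : 0 < lam * lam := mul_pos_of_neg_of_neg hneg hneg
  simp only [smul_eq_mul, mul_one] at key
  nlinarith [key, h3, h4]

/-- Matrix Cauchy–Schwarz: for a square-integrable real random variable `Z` and a
random symmetric `d×d` matrix `X`,
`−(E[Z²])^{1/2} (E[X²])^{1/2} ⪯ E[Z X] ⪯ (E[Z²])^{1/2} (E[X²])^{1/2}`
in the Loewner (positive semidefinite) order; here `R` denotes the positive
semidefinite matrix square root of `E[X²]`. -/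
theorem matrix_cauchy_schwarz_loewner
    {Ω : Type*} [MeasurableSpace Ω] (μ : Measure Ω) [IsProbabilityMeasure μ]
    (d : ℕ) (Z : Ω → ℝ) (X : Ω → Matrix (Fin d) (Fin d) ℝ)
    (hZmeas : Measurable Z) (hXmeas : ∀ i j, Measurable fun ω => X ω i j)
    (hsym : ∀ ω, (X ω).IsSymm)
    (hZ2 : Integrable (fun ω => Z ω ^ 2) μ)
    (hZX : ∀ i j, Integrable (fun ω => Z ω * X ω i j) μ)
    (hX2 : ∀ i j, Integrable (fun ω => (X ω * X ω) i j) μ)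
    (R : Matrix (Fin d) (Fin d) ℝ) (hR : R.PosSemidef)
    (hRsq : R * R = Matrix.of fun i j => ∫ ω, (X ω * X ω) i j ∂μ) :
    (Real.sqrt (∫ ω, Z ω ^ 2 ∂μ) • R
        - Matrix.of fun i j => ∫ ω, Z ω * X ω i j ∂μ).PosSemidef ∧
      ((Matrix.of fun i j => ∫ ω, Z ω * X ω i j ∂μ)
        + Real.sqrt (∫ ω, Z ω ^ 2 ∂μ) • R).PosSemidef := by
  set s := Real.sqrt (∫ ω, Z ω ^ 2 ∂μ) with hs
  set A : Matrix (Fin d) (Fin d) ℝ := Matrix.of fun i j => ∫ ω, Z ω * X ω i j ∂μ with hA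
  set B : Matrix (Fin d) (Fin d) ℝ := s • R with hB
  have hXsymm : ∀ ω i j, X ω i j = X ω j i := fun ω i j =>
    congrFun (congrFun (hsym ω) j) i
  have hs0 : 0 ≤ s := Real.sqrt_nonneg _
  have hZ2nn : 0 ≤ ∫ ω, Z ω ^ 2 ∂μ := integral_nonneg fun ω => sq_nonneg _
  have hss : s * s = ∫ ω, Z ω ^ 2 ∂μ := Real.mul_self_sqrt hZ2nn
  have hBpsd : B.PosSemidef := by
    refine posSemidef_iff_dotProduct_mulVec.mpr ⟨?_, ?_⟩
    · rw [hB, Matrix.IsHermitian, Matrix.conjTranspose_smul, hR.1, star_trivial]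
    · intro x
      rw [hB, Matrix.smul_mulVec, dotProduct_smul, smul_eq_mul]
      exact mul_nonneg hs0 (hR.dotProduct_mulVec_nonneg x)
  have hAherm : A.IsHermitian := by
    rw [Matrix.IsHermitian]
    ext i j
    simp only [Matrix.conjTranspose_apply, hA, Matrix.of_apply, star_trivial]
    congr 1
    funext ω
    rw [hXsymm ω j i]
  have hAt : Aᵀ = A := by
    ext i j
    have := congrFun (congrFun hAherm i) j
    simpa [Matrix.conjTranspose_apply] using this
  -- key positivity of B*B - A*A
  have hBBsq : B * B = (∫ ω, Z ω ^ 2 ∂μ) • (R * R) := by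
    rw [hB, Matrix.smul_mul, Matrix.mul_smul, smul_smul, hss]
  have hsq : (B * B - A * A).PosSemidef := by
    refine posSemidef_iff_dotProduct_mulVec.mpr ⟨?_, ?_⟩
    · have h1 : (B * B).IsHermitian := by
        have : (B * B).PosSemidef := by rw [← pow_two]; exact hBpsd.pow 2
        exact this.1
      have h2 : (A * A).IsHermitian := by
        nth_rewrite 1 [← hAherm]
        exact (Matrix.posSemidef_conjTranspose_mul_self A).1
      exact h1.sub h2
    · intro x
      rw [star_trivial]
      set g : Fin d → Ω → ℝ := fun i ω => ∑ j, X ω i j * x j with hg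
      -- integrability facts
      have hgZ : ∀ i, Integrable (fun ω => Z ω * g i ω) μ := by
        intro i
        have he : (fun ω => Z ω * g i ω)
            = fun ω => ∑ j, (Z ω * X ω i j) * x j := by
          funext ω
          rw [hg]
          simp only [Finset.mul_sum]
          congr 1; funext j; ring
        rw [he]
        exact integrable_finset_sum _ fun j _ => (hZX i j).mul_const _
      have hpoint : ∀ ω, (∑ l, g l ω ^ 2)
          = ∑ j, ∑ k, x j * ((X ω * X ω) j k * x k) := by
        intro ω
        simp only [hg, Matrix.mul_apply, Finset.mul_sum, Finset.sum_mul, pow_two]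
        rw [Finset.sum_comm]
        congr 1; funext j
        rw [Finset.sum_comm]
        congr 1; funext k
        congr 1; funext l
        rw [hXsymm ω l j]
        ring
      have hbound : Integrable (fun ω => ∑ l, g l ω ^ 2) μ := by
        have he : (fun ω => ∑ l, g l ω ^ 2)
            = fun ω => ∑ j, ∑ k, x j * ((X ω * X ω) j k * x k) := funext hpoint
        rw [he]
        exact integrable_finset_sum _ fun j _ => integrable_finset_sum _ fun k _ =>
          (((hX2 j k).mul_const (x k)).const_mul (x j))
      have hgmeas : ∀ i, Measurable (g i) := by
        intro i
        apply Finset.measurable_sum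
        intro j _
        exact (hXmeas i j).mul_const _
      have hgsq : ∀ i, Integrable (fun ω => g i ω ^ 2) μ := by
        intro i
        apply hbound.mono' (((hgmeas i).pow_const 2).aestronglyMeasurable)
        filter_upwards with ω
        rw [Real.norm_eq_abs, abs_of_nonneg (sq_nonneg _)]
        exact Finset.single_le_sum (fun l _ => sq_nonneg (g l ω)) (Finset.mem_univ i)
      -- entries of A *ᵥ x
      have hAx : ∀ i, (A *ᵥ x) i = ∫ ω, Z ω * g i ω ∂μ := by
        intro i
        have h1 : (A *ᵥ x) i = ∑ j, (∫ ω, Z ω * X ω i j ∂μ) * x j := rfl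
        rw [h1]
        have h2 : ∀ j, (∫ ω, Z ω * X ω i j ∂μ) * x j
            = ∫ ω, (Z ω * X ω i j) * x j ∂μ := fun j => (integral_mul_const _ _).symm
        simp_rw [h2]
        rw [← integral_finset_sum _ fun j _ => (hZX i j).mul_const (x j)]
        congr 1; funext ω
        rw [hg]; simp only [Finset.mul_sum]; congr 1; funext j; ring
      -- quadratic form of A * A
      have hAAx : x ⬝ᵥ ((A * A) *ᵥ x) = ∑ i, (∫ ω, Z ω * g i ω ∂μ) ^ 2 := by
        rw [← mulVec_mulVec, dotProduct_mulVec, ← mulVec_transpose, hAt]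
        rw [dotProduct]
        congr 1; funext i
        rw [hAx i, pow_two]
      -- quadratic form of B * B
      have hMx : x ⬝ᵥ ((R * R) *ᵥ x) = ∑ l, ∫ ω, g l ω ^ 2 ∂μ := by
        rw [hRsq]
        have h1 : x ⬝ᵥ ((Matrix.of fun i j => ∫ ω, (X ω * X ω) i j ∂μ) *ᵥ x)
            = ∑ j, ∑ k, x j * ((∫ ω, (X ω * X ω) j k ∂μ) * x k) := by
          simp [dotProduct, Matrix.mulVec, Finset.mul_sum]
        rw [h1]
        have h2 : ∀ (j k : Fin d), x j * ((∫ ω, (X ω * X ω) j k ∂μ) * x k)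
            = ∫ ω, x j * ((X ω * X ω) j k * x k) ∂μ := by
          intro j k
          rw [integral_const_mul, integral_mul_const]
        simp_rw [h2]
        have h3 : ∀ j : Fin d, ∑ k, ∫ ω, x j * ((X ω * X ω) j k * x k) ∂μ
            = ∫ ω, ∑ k, x j * ((X ω * X ω) j k * x k) ∂μ := fun j =>
          (integral_finset_sum _ fun k _ =>
            (((hX2 j k).mul_const (x k)).const_mul (x j))).symm
        simp_rw [h3]
        rw [← integral_finset_sum _ (fun j _ => integrable_finset_sum _ fun k _ =>
          (((hX2 j k).mul_const (x k)).const_mul (x j)))]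
        rw [← integral_finset_sum _ fun l _ => hgsq l]
        congr 1; funext ω
        rw [hpoint ω]
      -- assemble
      rw [sub_mulVec, dotProduct_sub, hBBsq, Matrix.smul_mulVec,
        dotProduct_smul, smul_eq_mul, hMx, hAAx, Finset.mul_sum]
      rw [← Finset.sum_sub_distrib]
      apply Finset.sum_nonneg
      intro i _
      rw [sub_nonneg]
      exact my_integral_cs μ Z (g i) hZ2 (hgsq i) (hgZ i)
  constructor
  · exact my_psd_sub_of_sq hAherm hBpsd hsq
  · have h1 : ((-A) * (-A)) = A * A := by rw [neg_mul_neg]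
    have h2 : (B - (-A)).PosSemidef :=
      my_psd_sub_of_sq hAherm.neg hBpsd (by rw [h1]; exact hsq)
    rw [sub_neg_eq_add, add_comm] at h2
    exact h2
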